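/- Let n ≥ 0 and r ≥ 2 be integers. Then the total number of different part sizes in all r-regular partitions of n equals the number of pairs (μ, i) with i ≥ 1 an integer not divisible by r and μ an r-flat partition of n − i: Σ_{λ∈O_r(n)} ℓ̄(λ) = #{(μ, i) : i ≥ 1, r ∤ i, μ ∈ F_r(n − i)}. -/

import Mathlib

/-!
Mark each distinct part `i` of `λ ∈ O_r(n)`: removing one copy of `i` leaves an arbitrary
`r`-regular partition of `n − i`, so the left side is `∑_{i ≥ 1, r ∤ i} |O_r(n − i)|`.
Glaisher's theorem gives `|O_r(m)| = |D_r(m)|`, and conjugation maps `F_r(m)` bijectively onto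
`D_r(m)`, because `i` occurs `μ_i − μ_{i+1}` times in the conjugate of `μ`.
-/

open scoped Classical

namespace BeckPaper

/-- The parts of a partition, sorted in non-increasing order. -/
def partsList {n : ℕ} (p : n.Partition) : List ℕ := p.parts.sort (· ≥ ·)

/-- The `i`-th part of a partition (`1`-indexed); `0` if `i` exceeds the number of parts. -/
def part {n : ℕ} (p : n.Partition) (i : ℕ) : ℕ := (partsList p).getD (i - 1) 0

/-- `ℓ(λ)`: the number of parts of `λ`. -/
def numParts {n : ℕ} (p : n.Partition) : ℕ := Multiset.card p.parts

/-- `ℓ_t(λ)`: the number of parts of `λ` congruent to `t` modulo `r`. -/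
def lMod (r t : ℕ) {n : ℕ} (p : n.Partition) : ℕ :=
  Multiset.card (p.parts.filter (fun x => x % r = t % r))

/-- `ℓ̄_t(λ)`: the number of different part sizes appearing at least `t` times in `λ`. -/
def lRep (t : ℕ) {n : ℕ} (p : n.Partition) : ℕ :=
  (p.parts.toFinset.filter (fun s => t ≤ p.parts.count s)).card

/-- `ℓ̄(λ)`: the number of different part sizes of `λ`. -/
def lDist {n : ℕ} (p : n.Partition) : ℕ := p.parts.toFinset.card

/-- `d_t(λ)`: the number of indices `1 ≤ i ≤ ℓ(λ)` with `λ_i − λ_{i+1} ≥ t`. -/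
def dCount (t : ℕ) {n : ℕ} (p : n.Partition) : ℕ :=
  ((Finset.Icc 1 (numParts p)).filter (fun i => t ≤ part p i - part p (i + 1))).card

/-- `λ ∈ O_r(n)`: no part is divisible by `r`. -/
def IsRegular (r : ℕ) {n : ℕ} (p : n.Partition) : Prop := ∀ x ∈ p.parts, ¬ r ∣ x

/-- `λ ∈ D_r(n)`: no part appears more than `r − 1` times. -/
def IsRestricted (r : ℕ) {n : ℕ} (p : n.Partition) : Prop :=
  ∀ s : ℕ, p.parts.count s ≤ r - 1

/-- `λ ∈ F_r(n)`: all differences of consecutive parts (with `λ_{k+1} = 0`) are `≤ r − 1`. -/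
def IsFlat (r : ℕ) {n : ℕ} (p : n.Partition) : Prop :=
  ∀ i, 1 ≤ i → i ≤ numParts p → part p i - part p (i + 1) ≤ r - 1

/-- `λ ∈ O_{1,r}(n)`: the set of part sizes divisible by `r` has exactly one element. -/
def IsOneRegular (r : ℕ) {n : ℕ} (p : n.Partition) : Prop :=
  (p.parts.toFinset.filter (fun s => r ∣ s)).card = 1

/-- `λ ∈ D_{1,r}(n)`: exactly one part size appears at least `r` times. -/
def IsOneRestricted (r : ℕ) {n : ℕ} (p : n.Partition) : Prop :=
  (p.parts.toFinset.filter (fun s => r ≤ p.parts.count s)).card = 1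

/-- `λ ∈ F_{1,r}(n)`: exactly one difference of consecutive parts is `≥ r`, and all
other such differences are `≤ r − 1`. -/
def IsOneFlat (r : ℕ) {n : ℕ} (p : n.Partition) : Prop :=
  ∃ i, (1 ≤ i ∧ i ≤ numParts p ∧ r ≤ part p i - part p (i + 1)) ∧
    ∀ j, 1 ≤ j → j ≤ numParts p → j ≠ i → part p j - part p (j + 1) ≤ r - 1

/-- `λ ∈ T_r(n)`: exactly one part size has multiplicity at least `r`, and that
multiplicity is strictly less than `2r`. -/
def IsInT (r : ℕ) {n : ℕ} (p : n.Partition) : Prop :=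
  ∃ s : ℕ, (r ≤ p.parts.count s ∧ p.parts.count s < 2 * r) ∧
    ∀ s' : ℕ, r ≤ p.parts.count s' → s' = s

end BeckPaper

open Finset

theorem List.eq_of_getD_eq_of_forall_pos {L L' : List ℕ} (hL : ∀ x ∈ L, 0 < x)
    (hL' : ∀ x ∈ L', 0 < x) (h : ∀ j, L.getD j 0 = L'.getD j 0) : L = L' := by
  induction L generalizing L' with
  | nil =>
    cases L' with
    | nil => rfl
    | cons b L' => exact absurd (h 0) (by simpa using (hL' b (by simp)).ne)
  | cons a L ih =>
    cases L' with
    | nil => exact absurd (h 0) (by simpa using (hL a (by simp)).ne')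
    | cons b L' =>
      simp only [List.mem_cons, forall_eq_or_imp] at hL hL'
      rw [show a = b from h 0, ih hL.2 hL'.2 fun j => h (j + 1)]

theorem List.Pairwise.antitone_getD {L : List ℕ} (hL : L.Pairwise (· ≥ ·)) :
    Antitone (L.getD · 0) := by
  induction L with
  | nil => simp [Antitone]
  | cons a L ih =>
    rw [List.pairwise_cons] at hL
    refine antitone_nat_of_succ_le fun i => ?_
    cases i with
    | zero => cases L <;> simp_all
    | succ i => simpa using ih hL.2 (Nat.le_succ i)

theorem List.sum_range_getD (L : List ℕ) : ∑ j ∈ Finset.range L.length, L.getD j 0 = L.sum := by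
  induction L with
  | nil => simp
  | cons a L ih =>
    rw [List.length_cons, Finset.sum_range_succ', List.sum_cons, add_comm]
    simp only [List.getD_cons_succ, List.getD_cons_zero, ih]

theorem Antitone.sum_Icc_sub_mul {f : ℕ → ℕ} (hf : Antitone f) (N : ℕ) :
    ∑ i ∈ Icc 1 N, (f i - f (i + 1)) * i + N * f (N + 1) = ∑ i ∈ Icc 1 N, f i := by
  induction N with
  | zero => simp
  | succ N ih =>
    rw [Finset.sum_Icc_succ_top (by omega), Finset.sum_Icc_succ_top (by omega), ← ih]
    have h1 := hf (Nat.le_succ (N + 1))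
    have h2 := hf (Nat.le_succ N)
    zify [h1, h2]
    ring

def Equiv.sigmaProdEquivSigmaFst {α γ : Type*} (β : α → Type*) :
    (Σ a, β a × γ) ≃ Σ ac : α × γ, β ac.1 where
  toFun x := ⟨(x.1, x.2.2), x.2.1⟩
  invFun y := ⟨y.1.1, y.2, y.1.2⟩
  left_inv _ := rfl
  right_inv _ := rfl

namespace BeckPaper

section Conjugate

variable {n : ℕ}

lemma coe_partsList (p : n.Partition) : (partsList p : Multiset ℕ) = p.parts :=
  Multiset.sort_eq _ _

lemma length_partsList (p : n.Partition) : (partsList p).length = numParts p := by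
  rw [numParts, ← coe_partsList p, Multiset.coe_card]

lemma antitone_part (p : n.Partition) : Antitone (part p) :=
  fun _ _ hij => (Multiset.pairwise_sort _ _).antitone_getD (Nat.sub_le_sub_right hij 1)

lemma part_eq_zero {p : n.Partition} {i : ℕ} (hi : numParts p < i) : part p i = 0 :=
  List.getD_eq_default _ _ (by rw [length_partsList]; omega)

lemma sum_part (p : n.Partition) : ∑ i ∈ Icc 1 (numParts p), part p i = n := by
  rw [← Finset.Ico_add_one_right_eq_Icc, Finset.sum_Ico_eq_sum_range, Nat.add_sub_cancel,
    ← length_partsList]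
  simp only [part, Nat.add_sub_cancel_left, List.sum_range_getD, ← Multiset.sum_coe,
    coe_partsList, p.parts_sum]

lemma part_injective : Function.Injective (part (n := n)) := by
  intro p q h
  refine Nat.Partition.ext ?_
  rw [← coe_partsList p, ← coe_partsList q]
  congr 1
  refine List.eq_of_getD_eq_of_forall_pos ?_ ?_ fun j => congrFun h (j + 1)
  · exact fun x hx => p.parts_pos (by rwa [← coe_partsList p])
  · exact fun x hx => q.parts_pos (by rwa [← coe_partsList q])

/-- The conjugate partition, described by multiplicities: `i` occurs `λ_i − λ_{i+1}` times.
In this form, flatness of `λ` is literally the multiplicity bound on its conjugate. -/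
def conj (p : n.Partition) : n.Partition where
  parts := ∑ i ∈ Icc 1 (numParts p), Multiset.replicate (part p i - part p (i + 1)) i
  parts_pos := by
    intro x hx
    obtain ⟨i, hi, hx⟩ := Multiset.mem_sum.1 hx
    rw [Multiset.eq_of_mem_replicate hx]
    exact (Finset.mem_Icc.1 hi).1
  parts_sum := by
    rw [← Multiset.coe_sumAddMonoidHom, map_sum]
    simp only [Multiset.coe_sumAddMonoidHom, Multiset.sum_replicate, smul_eq_mul]
    have := (antitone_part p).sum_Icc_sub_mul (numParts p)
    rwa [part_eq_zero (Nat.lt_succ_self _), mul_zero, add_zero, sum_part] at this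

lemma count_conj (p : n.Partition) {s : ℕ} (hs : 1 ≤ s) :
    (conj p).parts.count s = part p s - part p (s + 1) := by
  simp only [conj, Multiset.count_sum', Multiset.count_replicate, Finset.sum_ite_eq',
    Finset.mem_Icc]
  split_ifs with h
  · rfl
  · rw [part_eq_zero (by omega), part_eq_zero (by omega), Nat.sub_self]

lemma isRestricted_conj_iff {r : ℕ} {p : n.Partition} :
    IsRestricted r (conj p) ↔ IsFlat r p := by
  refine ⟨fun h i hi _ => count_conj p hi ▸ h i, fun h s => ?_⟩
  rcases Nat.eq_zero_or_pos s with rfl | hs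
  · simp [Multiset.count_eq_zero.2 fun h0 => (conj p).parts_pos h0 |>.ne rfl]
  rw [count_conj p hs]
  by_cases hsk : s ≤ numParts p
  · exact h s hs hsk
  · rw [part_eq_zero (by omega), Nat.zero_sub]
    exact Nat.zero_le _

lemma conj_injective : Function.Injective (conj (n := n)) := by
  intro p q h
  have hgap : ∀ i, 1 ≤ i → part p i - part p (i + 1) = part q i - part q (i + 1) := fun i hi => by
    rw [← count_conj p hi, ← count_conj q hi, h]
  -- descending induction from an index beyond both lengths, where both sequences vanish
  have key : ∀ d i, 1 ≤ i → numParts p + numParts q < i + d → part p i = part q i := by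
    intro d
    induction d with
    | zero => intro i _ hi; rw [part_eq_zero (by omega), part_eq_zero (by omega)]
    | succ d ih =>
      intro i hi hid
      have := hgap i hi
      have := ih (i + 1) (by omega) (by omega)
      have := antitone_part p (Nat.le_add_right i 1)
      have := antitone_part q (Nat.le_add_right i 1)
      omega
  refine part_injective (funext fun i => ?_)
  rcases Nat.eq_zero_or_pos i with rfl | hi
  · exact key (numParts p + numParts q) 1 le_rfl (by omega)
  · exact key (numParts p + numParts q) i hi (by omega)

end Conjugate

lemma card_flat_eq_card_restricted (r m : ℕ) :
    #{p : m.Partition | IsFlat r p} = #{p : m.Partition | IsRestricted r p} := by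
  refine Finset.card_nbij conj (fun p hp => ?_) conj_injective.injOn (fun q hq => ?_)
  · simpa [isRestricted_conj_iff] using hp
  · obtain ⟨p, rfl⟩ := conj_injective.bijective_of_finite.2 q
    exact ⟨p, by simpa [isRestricted_conj_iff] using hq, rfl⟩

lemma card_regular_eq_card_restricted {r : ℕ} (hr : 0 < r) (m : ℕ) :
    #{p : m.Partition | IsRegular r p} = #{p : m.Partition | IsRestricted r p} := by
  have hreg : ({p : m.Partition | IsRegular r p} : Finset _) =
      Nat.Partition.restricted m (¬ r ∣ ·) := by
    ext p
    simp only [Nat.Partition.restricted, Finset.mem_filter, Finset.mem_univ, true_and]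
    rfl
  have hres : ({p : m.Partition | IsRestricted r p} : Finset _) =
      Nat.Partition.countRestricted m r := by
    ext p
    simp only [Nat.Partition.countRestricted, Finset.mem_filter, Finset.mem_univ, true_and]
    refine ⟨fun h s _ => by have := h s; omega, fun h s => show _ ≤ _ from ?_⟩
    by_cases hs : s ∈ p.parts
    · have := h s hs; omega
    · simp [Multiset.count_eq_zero.2 hs]
  rw [hreg, hres, Nat.Partition.card_restricted_eq_card_countRestricted m hr]

lemma sum_lDist_eq_sum_card_filter_mem {n : ℕ} (s : Finset n.Partition) :
    ∑ p ∈ s, lDist p = ∑ i ∈ range (n + 1), #{p ∈ s | i ∈ p.parts} := calc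
  _ = ∑ p ∈ s, #((range (n + 1)).bipartiteAbove (fun p i => i ∈ p.parts) p) := by
    refine Finset.sum_congr rfl fun p _ => congrArg card ?_
    ext i
    simp only [Finset.bipartiteAbove, Finset.mem_filter, Finset.mem_range, Multiset.mem_toFinset,
      iff_and_self]
    exact fun hi => Nat.lt_succ_of_le (Nat.Partition.le_of_mem_parts hi)
  _ = _ := Finset.sum_card_bipartiteAbove_eq_sum_card_bipartiteBelow _

lemma isRegular_iff_of_mem {r n i : ℕ} (hi1 : 1 ≤ i) (hin : i ≤ n) (hri : ¬ r ∣ i)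
    {p : n.Partition} (hp : i ∈ p.parts) :
    IsRegular r p ↔ IsRegular r (Nat.Partition.partitionWithPartEquiv hi1 hin ⟨p, hp⟩) := by
  rw [IsRegular, IsRegular, Nat.Partition.partitionWithPartEquiv_apply_parts]
  conv_lhs => rw [← Multiset.cons_erase hp, Multiset.forall_mem_cons]
  exact and_iff_right hri

lemma card_regular_filter_mem {r n i : ℕ} (hin : i ≤ n) :
    #{p ∈ ({p : n.Partition | IsRegular r p} : Finset _) | i ∈ p.parts} =
      if 1 ≤ i ∧ ¬ r ∣ i then #{q : (n - i).Partition | IsRegular r q} else 0 := by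
  split_ifs with hi
  · rw [Finset.filter_filter, ← Fintype.card_subtype, ← Fintype.card_subtype]
    exact Fintype.card_congr <| (Equiv.subtypeEquivRight fun p => and_comm).trans <|
      (Equiv.subtypeSubtypeEquivSubtypeInter (fun p : n.Partition => i ∈ p.parts) _).symm.trans <|
      Equiv.subtypeEquiv (Nat.Partition.partitionWithPartEquiv hi.1 hin)
        fun p => isRegular_iff_of_mem hi.1 hin hi.2 p.2
  · refine Finset.card_eq_zero.2 (Finset.filter_eq_empty_iff.2 fun p hp hip => hi ?_)
    exact ⟨p.parts_pos hip, (Finset.mem_filter.1 hp).2 i hip⟩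

lemma natCard_sigma_partition_prod_eq_sum (P : ∀ {m : ℕ}, m.Partition → Prop) (Q : ℕ → Prop)
    [DecidablePred Q] (n : ℕ) :
    Nat.card {x : Σ m : ℕ, m.Partition × ℕ // P x.2.1 ∧ Q x.2.2 ∧ x.1 + x.2.2 = n} =
      ∑ i ∈ range (n + 1), if Q i then #{μ : (n - i).Partition | P μ} else 0 := by
  let S := (antidiagonal n).sigma fun mi => ({μ : mi.1.Partition | P μ ∧ Q mi.2} : Finset _)
  let e := Equiv.sigmaProdEquivSigmaFst (γ := ℕ) Nat.Partition
  have hS : ∀ x, (P x.2.1 ∧ Q x.2.2 ∧ x.1 + x.2.2 = n) ↔ e x ∈ S := by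
    intro x
    simp only [S, e, Equiv.sigmaProdEquivSigmaFst, Equiv.coe_fn_mk, Finset.mem_sigma,
      Finset.HasAntidiagonal.mem_antidiagonal, Finset.mem_filter, Finset.mem_univ, true_and]
    tauto
  rw [Nat.card_congr (e.subtypeEquiv hS), Nat.card_eq_finsetCard, Finset.card_sigma,
    ← Finset.Nat.sum_antidiagonal_swap, Finset.Nat.sum_antidiagonal_eq_sum_range_succ_mk]
  refine Finset.sum_congr rfl fun i _ => ?_
  split_ifs with hi <;> simp [hi]

theorem dist_regular_eq_pairs (n r : ℕ) (hr : 2 ≤ r) :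
    (∑ p ∈ Finset.univ.filter (fun p : n.Partition => IsRegular r p), lDist p) =
      Nat.card {x : Σ m : ℕ, m.Partition × ℕ //
        IsFlat r x.2.1 ∧ 1 ≤ x.2.2 ∧ ¬ r ∣ x.2.2 ∧ x.1 + x.2.2 = n} := by
  have hpairs := natCard_sigma_partition_prod_eq_sum (IsFlat r) (fun i => 1 ≤ i ∧ ¬ r ∣ i) n
  simp only [and_assoc] at hpairs
  rw [hpairs, sum_lDist_eq_sum_card_filter_mem]
  refine Finset.sum_congr rfl fun i hi => ?_
  rw [card_regular_filter_mem (Nat.le_of_lt_succ (Finset.mem_range.1 hi)),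
    card_regular_eq_card_restricted (by omega), card_flat_eq_card_restricted]

end BeckPaper
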